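/- Let L be a lattice and let Θ be a congruence of L. Define Θ̂ on the lattice M̂(L) of Boolean triples by: Θ̂((x₀,y₀,z₀),(x₁,y₁,z₁)) iff Θ(x₀,x₁), Θ(y₀,y₁), and Θ(z₀,z₁). Then Θ̂ is a congruence of M̂(L): it is an equivalence relation compatible with the componentwise meet and with the join of M̂(L) (the Boolean closure of the componentwise join). -/

import Mathlib

/-- A triple `(x, y, z)` in a lattice is *Boolean* if
`x = (x ⊔ y) ⊓ (x ⊔ z)`, `y = (y ⊔ x) ⊓ (y ⊔ z)`, `z = (z ⊔ x) ⊓ (z ⊔ y)`. -/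
def IsBoolean {L : Type*} [Lattice L] (t : L × L × L) : Prop :=
  t.1 = (t.1 ⊔ t.2.1) ⊓ (t.1 ⊔ t.2.2) ∧
  t.2.1 = (t.2.1 ⊔ t.1) ⊓ (t.2.1 ⊔ t.2.2) ∧
  t.2.2 = (t.2.2 ⊔ t.1) ⊓ (t.2.2 ⊔ t.2.1)

/-- The Boolean closure of a triple. -/
def bClosure {L : Type*} [Lattice L] (t : L × L × L) : L × L × L :=
  ((t.1 ⊔ t.2.1) ⊓ (t.1 ⊔ t.2.2),
   (t.2.1 ⊔ t.1) ⊓ (t.2.1 ⊔ t.2.2),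
   (t.2.2 ⊔ t.1) ⊓ (t.2.2 ⊔ t.2.1))

variable {L : Type*} [Lattice L]

theorem isBoolean_of_rep (u v w : L) :
    IsBoolean ((u ⊓ v, u ⊓ w, v ⊓ w) : L × L × L) := by
  refine ⟨le_antisymm (le_inf le_sup_left le_sup_left) ?_,
          le_antisymm (le_inf le_sup_left le_sup_left) ?_,
          le_antisymm (le_inf le_sup_left le_sup_left) ?_⟩
  · exact inf_le_inf (sup_le inf_le_left inf_le_left) (sup_le inf_le_right inf_le_left)
  · exact inf_le_inf (sup_le inf_le_left inf_le_left) (sup_le inf_le_right inf_le_right)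
  · exact inf_le_inf (sup_le inf_le_left inf_le_right) (sup_le inf_le_right inf_le_right)

theorem isBoolean_iff_rep (t : L × L × L) :
    IsBoolean t ↔ ∃ u v w : L, t.1 = u ⊓ v ∧ t.2.1 = u ⊓ w ∧ t.2.2 = v ⊓ w := by
  constructor
  · rintro ⟨h1, h2, h3⟩
    refine ⟨t.1 ⊔ t.2.1, t.1 ⊔ t.2.2, t.2.1 ⊔ t.2.2, h1, ?_, ?_⟩
    · conv_lhs => rw [h2]
      rw [sup_comm t.2.1 t.1]
    · conv_lhs => rw [h3]
      rw [sup_comm t.2.2 t.1, sup_comm t.2.2 t.2.1]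
  · rintro ⟨u, v, w, h1, h2, h3⟩
    obtain ⟨a, b, c⟩ := t
    simp only at h1 h2 h3
    subst h1 h2 h3
    exact isBoolean_of_rep u v w

theorem bClosure_isBoolean (t : L × L × L) : IsBoolean (bClosure t) := by
  rw [isBoolean_iff_rep]
  refine ⟨t.1 ⊔ t.2.1, t.1 ⊔ t.2.2, t.2.1 ⊔ t.2.2, rfl, ?_, ?_⟩
  · show (t.2.1 ⊔ t.1) ⊓ (t.2.1 ⊔ t.2.2) = _
    rw [sup_comm t.2.1 t.1]
  · show (t.2.2 ⊔ t.1) ⊓ (t.2.2 ⊔ t.2.1) = _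
    rw [sup_comm t.2.2 t.1, sup_comm t.2.2 t.2.1]

theorem IsBoolean.inf {a b : L × L × L} (ha : IsBoolean a) (hb : IsBoolean b) :
    IsBoolean (a ⊓ b) := by
  rw [isBoolean_iff_rep] at ha hb ⊢
  obtain ⟨u, v, w, h1, h2, h3⟩ := ha
  obtain ⟨u', v', w', h1', h2', h3'⟩ := hb
  refine ⟨u ⊓ u', v ⊓ v', w ⊓ w', ?_, ?_, ?_⟩
  · show a.1 ⊓ b.1 = _
    rw [h1, h1', inf_inf_inf_comm]
  · show a.2.1 ⊓ b.2.1 = _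
    rw [h2, h2', inf_inf_inf_comm]
  · show a.2.2 ⊓ b.2.2 = _
    rw [h3, h3', inf_inf_inf_comm]

theorem le_bClosure (t : L × L × L) : t ≤ bClosure t :=
  ⟨le_inf le_sup_left le_sup_left, le_inf le_sup_left le_sup_left,
   le_inf le_sup_left le_sup_left⟩

theorem bClosure_le {t c : L × L × L} (hc : IsBoolean c) (h : t ≤ c) :
    bClosure t ≤ c := by
  obtain ⟨h1, h2, h3⟩ := h
  refine ⟨?_, ?_, ?_⟩
  · rw [hc.1]; exact inf_le_inf (sup_le_sup h1 h2) (sup_le_sup h1 h3)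
  · rw [hc.2.1]; exact inf_le_inf (sup_le_sup h2 h1) (sup_le_sup h2 h3)
  · rw [hc.2.2]; exact inf_le_inf (sup_le_sup h3 h1) (sup_le_sup h3 h2)

/-- The lattice `M̂(L)` of Boolean triples of `L`, ordered componentwise. -/
def BoolTriple (L : Type*) [Lattice L] := {t : L × L × L // IsBoolean t}

instance : PartialOrder (BoolTriple L) := Subtype.partialOrder _

instance : Lattice (BoolTriple L) where
  sup a b := ⟨bClosure (a.1 ⊔ b.1), bClosure_isBoolean _⟩
  le_sup_left a b := show a.1 ≤ bClosure (a.1 ⊔ b.1) from le_trans le_sup_left (le_bClosure _)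
  le_sup_right a b := show b.1 ≤ bClosure (a.1 ⊔ b.1) from le_trans le_sup_right (le_bClosure _)
  sup_le a b c hac hbc := show bClosure (a.1 ⊔ b.1) ≤ c.1 from bClosure_le c.2 (sup_le hac hbc)
  inf a b := ⟨a.1 ⊓ b.1, a.2.inf b.2⟩
  inf_le_left a b := show a.1 ⊓ b.1 ≤ a.1 from inf_le_left
  inf_le_right a b := show a.1 ⊓ b.1 ≤ b.1 from inf_le_right
  le_inf a b c hab hac := show a.1 ≤ b.1 ⊓ c.1 from le_inf hab hac

/-- A *congruence* of a lattice: an equivalence relation compatible with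
joins and meets. -/
def IsLatticeCongruence {α : Type*} [Lattice α] (Θ : α → α → Prop) : Prop :=
  Equivalence Θ ∧
    ∀ a b c d : α, Θ a b → Θ c d → Θ (a ⊔ c) (b ⊔ d) ∧ Θ (a ⊓ c) (b ⊓ d)

/-! `Θ̂` is the restriction to `M̂(L)` of the componentwise congruence `Θ × Θ × Θ` of `L × L × L`.
Meets in `M̂(L)` are computed in `L × L × L`, and a join in `M̂(L)` is the Boolean closure of a join
in `L × L × L`; the closure is a lattice polynomial in the three components, so every congruence
respects it. -/

namespace IsLatticeCongruence

variable {α β : Type*} [Lattice α] [Lattice β]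

theorem sup {Θ : α → α → Prop} (hΘ : IsLatticeCongruence Θ) {a b c d : α} (hab : Θ a b)
    (hcd : Θ c d) : Θ (a ⊔ c) (b ⊔ d) :=
  (hΘ.2 a b c d hab hcd).1

theorem inf {Θ : α → α → Prop} (hΘ : IsLatticeCongruence Θ) {a b c d : α} (hab : Θ a b)
    (hcd : Θ c d) : Θ (a ⊓ c) (b ⊓ d) :=
  (hΘ.2 a b c d hab hcd).2

theorem prod {Θ : α → α → Prop} {Ψ : β → β → Prop} (hΘ : IsLatticeCongruence Θ)
    (hΨ : IsLatticeCongruence Ψ) :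
    IsLatticeCongruence (fun s t : α × β => Θ s.1 t.1 ∧ Ψ s.2 t.2) := by
  obtain ⟨reflΘ, symmΘ, transΘ⟩ := hΘ.1
  obtain ⟨reflΨ, symmΨ, transΨ⟩ := hΨ.1
  refine ⟨⟨fun s => ⟨reflΘ _, reflΨ _⟩, fun h => ⟨symmΘ h.1, symmΨ h.2⟩,
    fun h h' => ⟨transΘ h.1 h'.1, transΨ h.2 h'.2⟩⟩, ?_⟩
  rintro a b c d ⟨hab₁, hab₂⟩ ⟨hcd₁, hcd₂⟩
  exact ⟨⟨hΘ.sup hab₁ hcd₁, hΨ.sup hab₂ hcd₂⟩, ⟨hΘ.inf hab₁ hcd₁, hΨ.inf hab₂ hcd₂⟩⟩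

theorem bClosure {Θ : α → α → Prop} (hΘ : IsLatticeCongruence Θ) {s t : α × α × α}
    (h : Θ s.1 t.1 ∧ Θ s.2.1 t.2.1 ∧ Θ s.2.2 t.2.2) :
    Θ (bClosure s).1 (bClosure t).1 ∧ Θ (bClosure s).2.1 (bClosure t).2.1 ∧
      Θ (bClosure s).2.2 (bClosure t).2.2 := by
  obtain ⟨hx, hy, hz⟩ := h
  exact ⟨hΘ.inf (hΘ.sup hx hy) (hΘ.sup hx hz), hΘ.inf (hΘ.sup hy hx) (hΘ.sup hy hz),
    hΘ.inf (hΘ.sup hz hx) (hΘ.sup hz hy)⟩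

end IsLatticeCongruence

/-- If `Θ` is a congruence of `L`, then the componentwise relation `Θ̂` is a
congruence of the lattice `M̂(L)` of Boolean triples. -/
theorem isLatticeCongruence_hat {L : Type*} [Lattice L]
    (Θ : L → L → Prop) (hΘ : IsLatticeCongruence Θ) :
    IsLatticeCongruence
      (fun a b : BoolTriple L =>
        Θ a.1.1 b.1.1 ∧ Θ a.1.2.1 b.1.2.1 ∧ Θ a.1.2.2 b.1.2.2) := by
  have hcube := hΘ.prod (hΘ.prod hΘ)
  refine ⟨hcube.1.comap Subtype.val, fun a b c d hab hcd => ⟨?_, hcube.inf hab hcd⟩⟩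
  exact hΘ.bClosure (hcube.sup hab hcd)
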